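/- Let Φ ∈ P(M,N) and Ψ ∈ P(M,M−N) be Naimark complements and K ⊆ [M] with |K| = k ≤ N. Then the multiset of singular values of Ψ_{K^c} consists of M−N−k ones together with the k singular values of Φ_K (when k ≤ M−N). -/

import Mathlib

/-!
Orthonormality of the rows of Ψ gives Ψ_{Kᶜ} Ψ_{Kᶜ}* = 1 - Ψ_K Ψ_K*, and restricting the Naimark
relation Ψ*Ψ = 1 - Φ*Φ to K × K gives Ψ_K* Ψ_K = 1 - Φ_K* Φ_K. The L × L matrix Ψ_K Ψ_K* has the
eigenvalues of the k × k matrix Ψ_K* Ψ_K together with L - k zeros, so the eigenvalues of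
Ψ_{Kᶜ} Ψ_{Kᶜ}* are L - k ones together with the eigenvalues of Φ_K* Φ_K.
-/

open Matrix Finset

noncomputable def colSub {N M : ℕ} (Φ : Matrix (Fin N) (Fin M) ℂ) (K : Finset (Fin M)) :
    Matrix (Fin N) ↥K ℂ := Φ.submatrix id (fun k => (k : Fin M))

/-- The k-dimensional volume of the parallelotope spanned by the columns of Φ indexed by K. -/
noncomputable def vol {N M : ℕ} (Φ : Matrix (Fin N) (Fin M) ℂ) (K : Finset (Fin M)) : ℝ :=
  Real.sqrt (((colSub Φ K)ᴴ * colSub Φ K).det.re)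

/-- The multiset of singular values of a matrix, computed from Aᴴ * A. -/
noncomputable def svalsCol {m n : Type*} [Fintype m] [Fintype n] [DecidableEq n]
    (A : Matrix m n ℂ) : Multiset ℝ :=
  Multiset.map (fun i => Real.sqrt ((Matrix.isHermitian_conjTranspose_mul_self A).eigenvalues i))
    Finset.univ.val

/-- The multiset of singular values of a matrix, computed from A * Aᴴ. -/
noncomputable def svalsRow {m n : Type*} [Fintype m] [Fintype n] [DecidableEq m]
    (A : Matrix m n ℂ) : Multiset ℝ :=
  Multiset.map (fun i => Real.sqrt ((Matrix.isHermitian_mul_conjTranspose_self A).eigenvalues i))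
    Finset.univ.val

namespace Matrix.IsHermitian

variable {n 𝕜 : Type*} [RCLike 𝕜] [Fintype n] [DecidableEq n]

lemma eigenvalues_of_eq_one_sub {A B : Matrix n n 𝕜} (hA : A.IsHermitian) (hB : B.IsHermitian)
    (hBA : B = 1 - A) :
    univ.val.map hB.eigenvalues = (univ.val.map hA.eigenvalues).map (1 - ·) := by
  subst hBA
  have hcfc : cfc (fun x : ℝ => 1 - x) A = 1 - A := by
    rw [cfc_sub (fun _ => 1) (fun x => x) A, cfc_const (1 : ℝ) A, cfc_id' ℝ A, map_one]
  apply Multiset.map_injective (RCLike.ofReal_injective (K := 𝕜))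
  rw [Multiset.map_map, Multiset.map_map, ← hB.roots_charpoly_eq_eigenvalues, ← hcfc,
    hA.charpoly_cfc_eq, Polynomial.roots_prod _ _
      (prod_ne_zero_iff.mpr fun i _ => Polynomial.X_sub_C_ne_zero _)]
  simp only [Polynomial.roots_X_sub_C, Multiset.bind_singleton, Multiset.map_map]
  rfl

end Matrix.IsHermitian

lemma Matrix.eigenvalues_mul_conjTranspose_self {m n 𝕜 : Type*} [RCLike 𝕜] [Fintype m]
    [Fintype n] [DecidableEq m] [DecidableEq n] (A : Matrix m n 𝕜)
    (h : Fintype.card n ≤ Fintype.card m) :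
    univ.val.map (isHermitian_mul_conjTranspose_self A).eigenvalues =
      Multiset.replicate (Fintype.card m - Fintype.card n) 0 +
        univ.val.map (isHermitian_conjTranspose_mul_self A).eigenvalues := by
  apply Multiset.map_injective (RCLike.ofReal_injective (K := 𝕜))
  rw [Multiset.map_add, Multiset.map_replicate, RCLike.ofReal_zero, Multiset.map_map,
    Multiset.map_map,
    ← IsHermitian.roots_charpoly_eq_eigenvalues, ← IsHermitian.roots_charpoly_eq_eigenvalues,
    charpoly_mul_comm_of_le _ _ h, Polynomial.roots_mul
      (mul_ne_zero (pow_ne_zero _ Polynomial.X_ne_zero) (charpoly_monic _).ne_zero),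
    Polynomial.roots_X_pow, Multiset.nsmul_singleton]

lemma svalsRow_eq_map_sqrt {m n : Type*} [Fintype m] [Fintype n] [DecidableEq m]
    (A : Matrix m n ℂ) :
    svalsRow A = (univ.val.map (isHermitian_mul_conjTranspose_self A).eigenvalues).map Real.sqrt :=
  (Multiset.map_map _ _ _).symm

lemma svalsCol_eq_map_sqrt {m n : Type*} [Fintype m] [Fintype n] [DecidableEq n]
    (A : Matrix m n ℂ) :
    svalsCol A = (univ.val.map (isHermitian_conjTranspose_mul_self A).eigenvalues).map Real.sqrt :=
  (Multiset.map_map _ _ _).symm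

section colSub

variable {N M : ℕ} (Φ : Matrix (Fin N) (Fin M) ℂ) (K : Finset (Fin M))

lemma conjTranspose_colSub_mul_colSub :
    (colSub Φ K)ᴴ * colSub Φ K = (Φᴴ * Φ).submatrix (↑) (↑) := by
  rw [submatrix_mul _ _ _ id _ Function.bijective_id, colSub, conjTranspose_submatrix]

lemma colSub_compl_mul_conjTranspose :
    colSub Φ Kᶜ * (colSub Φ Kᶜ)ᴴ = Φ * Φᴴ - colSub Φ K * (colSub Φ K)ᴴ := by
  ext a b
  rw [Matrix.sub_apply, eq_sub_iff_add_eq]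
  simp only [mul_apply, conjTranspose_apply, colSub, submatrix_apply, id]
  rw [Finset.sum_coe_sort Kᶜ (fun j => Φ a j * star (Φ b j)),
    Finset.sum_coe_sort K (fun j => Φ a j * star (Φ b j)), Finset.sum_compl_add_sum]

end colSub

theorem naimark_singular_values {N L M k : ℕ}
    (Φ : Matrix (Fin N) (Fin M) ℂ) (Ψ : Matrix (Fin L) (Fin M) ℂ)
    (hkL : k ≤ L)
    (hΨ : Ψ * Ψᴴ = 1)
    (hNaimark : Ψᴴ * Ψ = 1 - Φᴴ * Φ)
    (K : Finset (Fin M)) (hK : K.card = k) :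
    svalsRow (colSub Ψ Kᶜ) = Multiset.replicate (L - k) 1 + svalsCol (colSub Φ K) := by
  have hrow : colSub Ψ Kᶜ * (colSub Ψ Kᶜ)ᴴ = 1 - colSub Ψ K * (colSub Ψ K)ᴴ := by
    rw [colSub_compl_mul_conjTranspose, hΨ]
  have hcol : (colSub Ψ K)ᴴ * colSub Ψ K = 1 - (colSub Φ K)ᴴ * colSub Φ K := by
    rw [conjTranspose_colSub_mul_colSub, conjTranspose_colSub_mul_colSub, hNaimark,
      submatrix_sub, Pi.sub_apply, Pi.sub_apply, submatrix_one _ Subtype.val_injective]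
  have hcard : Fintype.card K ≤ Fintype.card (Fin L) := by simpa [hK] using hkL
  have hpad := Matrix.eigenvalues_mul_conjTranspose_self (colSub Ψ K) hcard
  simp only [Fintype.card_coe, Fintype.card_fin, hK] at hpad
  rw [svalsRow_eq_map_sqrt, svalsCol_eq_map_sqrt,
    IsHermitian.eigenvalues_of_eq_one_sub (isHermitian_mul_conjTranspose_self _) _ hrow, hpad,
    IsHermitian.eigenvalues_of_eq_one_sub (isHermitian_conjTranspose_mul_self _) _ hcol]
  simp only [Multiset.map_add, Multiset.map_replicate, Multiset.map_map, Function.comp_def,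
    sub_zero, sub_sub_cancel, Real.sqrt_one]
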